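/- arXiv:2103.03971 — 2 statements merged into one kernel-verified Lean document; each statement's English description precedes it below -/
import Mathlib

section
/- Let φ : 2^{<ω} → 2^{<ω} be a computable monotone map and let Φ be the induced partial map on 2^ω, where Φ(X) is the (possibly finite) union of the strings φ(X↾n). Assume Φ is nowhere constant: for every σ ∈ 2^{<ω}, either Φ(X) is a finite string for some X ∈ ⟦σ⟧, or there exist X, Y ∈ ⟦σ⟧ with Φ(X) ≠ Φ(Y); then ψ(σ) := the longest common initial segment of {Φ(X) : X ∈ ⟦σ⟧} is a well-defined map ψ : 2^{<ω} → 2^{<ω} (the canonical generator of Φ). The graph {(σ, τ) : ψ(σ) = τ} is the set-difference A \ B of two computably enumerable subsets A, B of 2^{<ω} × 2^{<ω}. -/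
/-!
A string `τ` is a prefix of `Φ(X)` for every `X ∈ ⟦σ⟧` iff, by compactness of `⟦σ⟧`, there is a
level `N` such that `τ ⪯ φ(σρ)` for every `ρ` of length `N`; this is a c.e. condition `A` on
`(σ, τ)`. The strings `τ` with `(σ, τ) ∈ A` are exactly the prefixes of `ψ(σ)`, so `ψ(σ) = τ` iff
`(σ, τ) ∈ A` while neither `(σ, τ0)` nor `(σ, τ1)` is, and the latter condition `B` is c.e. too.
-/

open Filter

/-- The length-`n` initial segment of `X ∈ 2^ω`, as a finite binary string. -/
def seg (X : ℕ → Bool) (n : ℕ) : List Bool := (List.range n).map X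

/-- The cylinder `⟦σ⟧` of all sequences extending the string `σ`. -/
def cyl (σ : List Bool) : Set (ℕ → Bool) := {X | seg X σ.length = σ}

/-- The set of finite initial segments of the (possibly finite) output
`Φ(X) = ⋃ₙ φ(X↾n)` of the partial functional induced by a monotone `φ`. -/
def outPrefixes (φ : List Bool → List Bool) (X : ℕ → Bool) : Set (List Bool) :=
  {τ | ∃ n, τ <+: φ (seg X n)}

/-- A subset `S` of a primcodable type is computably enumerable if there is a
computable `R : α × ℕ → Bool` with `S = {x : ∃ n, R (x, n) = true}`. -/
def CE {α : Type} [Primcodable α] (S : Set α) : Prop :=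
  ∃ R : α × ℕ → Bool, Computable R ∧ S = {x | ∃ n, R (x, n) = true}

namespace Computable
variable {α β σ : Type*} [Primcodable α] [Primcodable β] [Primcodable σ]

theorem list_map {f : α → List β} {g : α → β → σ} (hf : Computable f) (hg : Computable₂ g) :
    Computable fun a => (f a).map (g a) := by
  have hstep : Computable₂ fun a (p : ℕ × List σ) => p.2 ++ (((f a)[p.1]?).map (g a)).toList :=
    list_append.comp (snd.comp snd) <| Primrec.optionToList.to_comp.comp <|
      option_map (list_getElem?.comp (hf.comp fst) (fst.comp snd)) (hg.comp (fst.comp fst) snd)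
  refine (nat_rec (list_length.comp hf) (const []) hstep).of_eq fun a => ?_
  suffices ∀ n, Nat.rec (motive := fun _ => List σ) []
      (fun n acc => acc ++ (((f a)[n]?).map (g a)).toList) n = ((f a).take n).map (g a) by
    simp only [this, List.take_length]
  intro n
  induction n with
  | zero => simp
  | succ n ih => rw [List.take_add_one, List.map_append, ← ih, ← Option.toList_map]

end Computable

theorem primrecRel_isPrefix : PrimrecRel fun (l τ : List Bool) => τ <+: l :=
  PrimrecRel.of_eq (r := fun l τ => l.take τ.length = τ)
    (Primrec.eq.comp (Primrec.list_take.comp (Primrec.list_length.comp Primrec.snd) Primrec.fst)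
      Primrec.snd) fun _ _ => eq_comm.trans List.prefix_iff_eq_take.symm

def stringsOfLength : ℕ → List (List Bool)
  | 0 => [[]]
  | n + 1 => (stringsOfLength n).flatMap fun ρ => [false :: ρ, true :: ρ]

theorem mem_stringsOfLength {n : ℕ} {ρ : List Bool} : ρ ∈ stringsOfLength n ↔ ρ.length = n := by
  induction n generalizing ρ with
  | zero => simp [stringsOfLength]
  | succ n ih => cases ρ with
    | nil => simp [stringsOfLength]
    | cons b ρ => cases b <;> simp [stringsOfLength, ih]

open Primrec in
theorem primrec_stringsOfLength : Primrec stringsOfLength := by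
  refine (nat_rec₁ [[]] (f := fun _ L => L.flatMap fun ρ => [false :: ρ, true :: ρ]) ?_).of_eq
    fun n => by induction n <;> simp [stringsOfLength, *]
  exact list_flatMap snd <| list_cons.comp (list_cons.comp (const false) snd)
    (list_cons.comp (list_cons.comp (const true) snd) (const []))

theorem CE.preimage {α β : Type} [Primcodable α] [Primcodable β] {S : Set β} (hS : CE S)
    {f : α → β} (hf : Computable f) : CE (f ⁻¹' S) := by
  obtain ⟨R, hR, rfl⟩ := hS
  exact ⟨fun x => R (f x.1, x.2), hR.comp ((hf.comp .fst).pair .snd), rfl⟩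

theorem CE.union {α : Type} [Primcodable α] {S T : Set α} (hS : CE S) (hT : CE T) :
    CE (S ∪ T) := by
  obtain ⟨R, hR, rfl⟩ := hS
  obtain ⟨R', hR', rfl⟩ := hT
  refine ⟨fun x => R x || R' x, (Primrec.or.to_comp.comp hR hR' : _), ?_⟩
  ext x
  simp [exists_or]

theorem continuous_seg (n : ℕ) : Continuous fun X => seg X n := by
  induction n with
  | zero => exact continuous_const
  | succ n ih =>
    simp only [seg, List.range_succ, List.map_append, List.map_cons, List.map_nil]
    exact (continuous_of_discreteTopology (f := fun p : List Bool × Bool => p.1 ++ [p.2])).comp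
      (ih.prodMk (continuous_apply n))

theorem seg_add (X : ℕ → Bool) (m n : ℕ) :
    seg X (m + n) = seg X m ++ seg (fun i => X (m + i)) n := by
  simp [seg, List.range_add, Function.comp_def]

theorem seg_prefix_seg (X : ℕ → Bool) {m n : ℕ} (h : m ≤ n) : seg X m <+: seg X n := by
  obtain ⟨k, rfl⟩ := Nat.exists_eq_add_of_le h
  rw [seg_add]; exact List.prefix_append _ _

theorem seg_getD {l : List Bool} {n : ℕ} (h : n ≤ l.length) :
    seg (fun i => l.getD i false) n = l.take n := by
  apply List.ext_getElem (by simp [seg, h])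
  intro i h1 h2
  simp only [seg, List.length_map, List.length_range] at h1
  simp [seg, List.getElem?_eq_getElem (h1.trans_le h)]

theorem isCompact_cyl (σ : List Bool) : IsCompact (cyl σ) :=
  ((isClosed_discrete {σ}).preimage (continuous_seg σ.length)).isCompact

theorem forall_cyl_exists_seg_iff {P : List Bool → Prop} (hP : ∀ ρ ρ', ρ <+: ρ' → P ρ → P ρ')
    (σ : List Bool) :
    (∀ X ∈ cyl σ, ∃ n, P (seg X n)) ↔ ∃ N, ∀ ρ : List Bool, ρ.length = N → P (σ ++ ρ) := by
  constructor
  · intro h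
    let U : ℕ → Set (ℕ → Bool) := fun n => {X | P (seg X n)}
    have hU_open (n : ℕ) : IsOpen (U n) :=
      (continuous_seg n).isOpen_preimage _ (isOpen_discrete _)
    have hU_mono : Monotone U := fun m n hmn X hX => hP _ _ (seg_prefix_seg X hmn) hX
    obtain ⟨N, hN⟩ := (isCompact_cyl σ).elim_directed_cover U hU_open
      (fun X hX => Set.mem_iUnion.2 (h X hX)) hU_mono.directed_le
    refine ⟨N, fun ρ hρ => ?_⟩
    let X : ℕ → Bool := fun i => (σ ++ ρ).getD i false
    have hXσ : X ∈ cyl σ := by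
      show seg X σ.length = σ
      rw [seg_getD (by simp), List.take_left]
    have hXρ : seg X (σ.length + N) = σ ++ ρ := by
      rw [seg_getD (by simp [hρ]), List.take_of_length_le (by simp [hρ])]
    exact hP _ _ (hXρ ▸ seg_prefix_seg X (Nat.le_add_left N σ.length)) (hN hXσ)
  · rintro ⟨N, hN⟩ X hX
    refine ⟨σ.length + N, ?_⟩
    rw [seg_add, hX]
    exact hN _ (by simp [seg])

def commonOutPrefixes (φ : List Bool → List Bool) : Set (List Bool × List Bool) :=
  {p | ∀ X ∈ cyl p.1, p.2 ∈ outPrefixes φ X}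

theorem mem_commonOutPrefixes_iff {φ : List Bool → List Bool}
    (hmono : ∀ σ τ : List Bool, σ <+: τ → φ σ <+: φ τ) {σ τ : List Bool} :
    (σ, τ) ∈ commonOutPrefixes φ ↔
      ∃ N, ∀ l ∈ (stringsOfLength N).map fun ρ => φ (σ ++ ρ), τ <+: l := by
  simpa [commonOutPrefixes, outPrefixes, mem_stringsOfLength] using
    forall_cyl_exists_seg_iff (P := fun ρ => τ <+: φ ρ) (fun ρ ρ' h hρ => hρ.trans (hmono ρ ρ' h)) σ

theorem ce_commonOutPrefixes {φ : List Bool → List Bool}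
    (hmono : ∀ σ τ : List Bool, σ <+: τ → φ σ <+: φ τ) (hφ : Computable φ) :
    CE (commonOutPrefixes φ) := by
  classical
  refine ⟨fun x => decide (∀ l ∈ (stringsOfLength x.2).map fun ρ => φ (x.1.1 ++ ρ), x.1.2 <+: l),
    ?_, by ext ⟨σ, τ⟩; simpa using mem_commonOutPrefixes_iff hmono⟩
  refine primrecRel_isPrefix.forall_mem_list.decide.to_comp.comp ?_ (Computable.snd.comp .fst)
  exact Computable.list_map (primrec_stringsOfLength.to_comp.comp .snd)
    (hφ.comp (Computable.list_append.comp (Computable.fst.comp (Computable.fst.comp .fst)) .snd))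

theorem List.eq_iff_prefix_and_forall_concat_not_prefix {α : Type*} {τ ψ : List α} :
    τ = ψ ↔ τ <+: ψ ∧ ∀ b, ¬ τ ++ [b] <+: ψ := by
  constructor
  · rintro rfl
    exact ⟨List.prefix_refl τ, fun b h => by simpa using h.length_le⟩
  · rintro ⟨hτ, hnext⟩
    by_contra hne
    have hlt : τ.length < ψ.length := lt_of_le_of_ne hτ.length_le fun h => hne (hτ.eq_of_length h)
    exact hnext _ (List.concat_get_prefix hτ hlt)

theorem stmt4_general (φ : List Bool → List Bool) (hφ : Computable φ)
    (hmono : ∀ σ τ : List Bool, σ <+: τ → φ σ <+: φ τ)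
    (ψ : List Bool → List Bool)
    (hψcommon : ∀ σ : List Bool, ∀ X ∈ cyl σ, ψ σ ∈ outPrefixes φ X)
    (hψlongest : ∀ σ τ : List Bool,
      (∀ X ∈ cyl σ, τ ∈ outPrefixes φ X) → τ <+: ψ σ) :
    ∃ A B : Set (List Bool × List Bool), CE A ∧ CE B ∧
      {p : List Bool × List Bool | ψ p.1 = p.2} = A \ B := by
  set A := commonOutPrefixes φ
  have hA : CE A := ce_commonOutPrefixes hmono hφ
  have mem_A_iff (σ τ : List Bool) : (σ, τ) ∈ A ↔ τ <+: ψ σ :=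
    ⟨hψlongest σ τ, fun h X hX => (hψcommon σ X hX).imp fun _ hn => h.trans hn⟩
  let extend (b : Bool) (p : List Bool × List Bool) : List Bool × List Bool := (p.1, p.2 ++ [b])
  have hextend (b : Bool) : Computable (extend b) :=
    Computable.fst.pair (Computable.list_concat.comp .snd (.const b))
  refine ⟨A, extend false ⁻¹' A ∪ extend true ⁻¹' A, hA,
    (hA.preimage (hextend false)).union (hA.preimage (hextend true)), ?_⟩
  ext ⟨σ, τ⟩
  rw [Set.mem_ofPred_eq, eq_comm, List.eq_iff_prefix_and_forall_concat_not_prefix, Bool.forall_bool]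
  simp [mem_A_iff, extend]

/-- For the partial functional `Φ` induced by a computable monotone `φ`, assumed
nowhere constant (on each cylinder `⟦σ⟧`, either `Φ` is undefined—i.e. has finite
output—for some `X`, or `Φ` takes two different values), the graph of the
canonical generator `ψ` (`ψ σ` = longest common initial segment of
`{Φ X : X ∈ ⟦σ⟧}`) is a difference of two c.e. sets. -/
theorem stmt4 (φ : List Bool → List Bool) (hφ : Computable φ)
    (hmono : ∀ σ τ : List Bool, σ <+: τ → φ σ <+: φ τ)
    (hnc : ∀ σ : List Bool,
      (∃ X ∈ cyl σ, ¬ Tendsto (fun n => (φ (seg X n)).length) atTop atTop) ∨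
      (∃ X ∈ cyl σ, ∃ Y ∈ cyl σ, outPrefixes φ X ≠ outPrefixes φ Y))
    (ψ : List Bool → List Bool)
    (hψcommon : ∀ σ : List Bool, ∀ X ∈ cyl σ, ψ σ ∈ outPrefixes φ X)
    (hψlongest : ∀ σ τ : List Bool,
      (∀ X ∈ cyl σ, τ ∈ outPrefixes φ X) → τ <+: ψ σ) :
    ∃ A B : Set (List Bool × List Bool), CE A ∧ CE B ∧
      {p : List Bool × List Bool | ψ p.1 = p.2} = A \ B :=
  stmt4_general φ hφ hmono ψ hψcommon hψlongest
end

section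
/- Let μ be a Borel probability measure on 2^ω and φ : 2^{<ω} → 2^{<ω}. Suppose there exists c ∈ ℕ with |φ(σ)| ≤ c·|σ| for every σ ∈ 2^{<ω}, and there exists r ∈ ℝ such that lim_{n→∞} |φ(X↾n)|/n = r for μ-almost every X ∈ 2^ω. Then lim_{n→∞} Avg(φ, μ, n) = r; in particular Rate(φ, μ) = r. -/
open Filter MeasureTheory

/-- The average output/input ratio
`Avg(φ, μ, n) = (1/n) Σ_{σ ∈ 2^n} μ(⟦σ⟧) |φ(σ)|`, where strings of length `n`
are indexed by `Fin n → Bool`. -/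
noncomputable def Avg (φ : List Bool → List Bool) (μ : Measure (ℕ → Bool))
    (n : ℕ) : ℝ :=
  (1 / n : ℝ) *
    ∑ f : Fin n → Bool, (μ (cyl (List.ofFn f))).toReal * ((φ (List.ofFn f)).length : ℝ)

/-!
Since `|φ(X↾n)|/n` depends only on `X↾n`, `Avg(φ, μ, n)` is its `μ`-integral. These functions are
bounded by `c`, so dominated convergence turns their a.e. convergence to `r` into `Avg(φ, μ, n) → r`.
-/

lemma seg_eq_ofFn (X : ℕ → Bool) (n : ℕ) : seg X n = List.ofFn (fun i : Fin n => X i) := by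
  apply List.ext_getElem <;> simp [seg]

lemma length_seg (X : ℕ → Bool) (n : ℕ) : (seg X n).length = n := by
  simp [seg]

lemma cyl_ofFn_eq_preimage {n : ℕ} (f : Fin n → Bool) :
    cyl (List.ofFn f) = (fun X (i : Fin n) => X i) ⁻¹' {f} := by
  ext X
  simp [cyl, seg_eq_ofFn, funext_iff]

lemma measurable_comp_seg {β : Type*} [MeasurableSpace β] (F : List Bool → β) (n : ℕ) :
    Measurable fun X => F (seg X n) := by
  simp_rw [seg_eq_ofFn]
  exact (measurable_of_finite fun f : Fin n → Bool => F (List.ofFn f)).comp (by fun_prop)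

lemma integral_comp_seg (μ : Measure (ℕ → Bool)) [IsFiniteMeasure μ] (F : List Bool → ℝ)
    (n : ℕ) :
    ∫ X, F (seg X n) ∂μ = ∑ f : Fin n → Bool, μ.real (cyl (List.ofFn f)) * F (List.ofFn f) := by
  have hmeas : Measurable (fun (X : ℕ → Bool) (i : Fin n) => X i) := by fun_prop
  simp_rw [seg_eq_ofFn]
  rw [← integral_map (f := fun f : Fin n → Bool => F (List.ofFn f)) hmeas.aemeasurable
      (measurable_of_finite _).aestronglyMeasurable,
    integral_fintype Integrable.of_finite]
  refine Finset.sum_congr rfl fun f _ => ?_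
  rw [smul_eq_mul, measureReal_def, measureReal_def,
    Measure.map_apply hmeas (measurableSet_singleton f), cyl_ofFn_eq_preimage]

lemma avg_eq_integral (φ : List Bool → List Bool) (μ : Measure (ℕ → Bool)) [IsFiniteMeasure μ]
    (n : ℕ) : Avg φ μ n = ∫ X, ((φ (seg X n)).length : ℝ) / n ∂μ := by
  rw [integral_comp_seg μ (fun σ => ((φ σ).length : ℝ) / n), Avg, Finset.mul_sum]
  refine Finset.sum_congr rfl fun f _ => ?_
  rw [measureReal_def]
  ring

lemma length_seg_div_le {φ : List Bool → List Bool} {c : ℕ}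
    (hc : ∀ σ : List Bool, (φ σ).length ≤ c * σ.length) (X : ℕ → Bool) (n : ℕ) :
    ((φ (seg X n)).length : ℝ) / n ≤ c := by
  rcases Nat.eq_zero_or_pos n with rfl | hn
  · simp
  rw [div_le_iff₀ (by exact_mod_cast hn)]
  exact_mod_cast length_seg X n ▸ hc (seg X n)

/-- If `|φ(σ)| ≤ c|σ|` for all strings `σ` and `|φ(X↾n)|/n → r` for `μ`-a.e. `X`,
then `lim_n Avg(φ, μ, n) = r`; in particular `Rate(φ, μ) = limsup_n Avg(φ, μ, n) = r`. -/
theorem stmt5 (μ : Measure (ℕ → Bool)) [IsProbabilityMeasure μ]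
    (φ : List Bool → List Bool) (c : ℕ)
    (hc : ∀ σ : List Bool, (φ σ).length ≤ c * σ.length)
    (r : ℝ)
    (hae : ∀ᵐ X ∂μ,
      Tendsto (fun n : ℕ => ((φ (seg X n)).length : ℝ) / n) atTop (nhds r)) :
    Tendsto (fun n : ℕ => Avg φ μ n) atTop (nhds r) ∧
      limsup (fun n : ℕ => Avg φ μ n) atTop = r := by
  have hmeas (n : ℕ) :
      AEStronglyMeasurable (fun X : ℕ → Bool => ((φ (seg X n)).length : ℝ) / n) μ :=
    (measurable_comp_seg (fun σ => ((φ σ).length : ℝ) / n) n).aestronglyMeasurable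
  have hbound (n : ℕ) : ∀ᵐ X ∂μ, ‖((φ (seg X n)).length : ℝ) / n‖ ≤ c :=
    ae_of_all _ fun X => by
      rw [Real.norm_of_nonneg (by positivity)]
      exact length_seg_div_le hc X n
  have hlim := tendsto_integral_of_dominated_convergence _ hmeas (integrable_const _) hbound hae
  simp only [integral_const, probReal_univ, one_smul, ← avg_eq_integral] at hlim
  exact ⟨hlim, hlim.limsup_eq⟩
end
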